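/- Let C = 1 − I_{d×d} be the 0-1 cost matrix (c_{ij} = 1 if i ≠ j, c_{ii} = 0). For every α in the probability simplex △^d, the Sinkhorn negentropy with cost C/ε converges to the negative Shannon entropy as ε → 0: lim_{ε→0} Ω_{C/ε}(α) = Σ_{i=1}^d α_i log α_i (with the convention 0 log 0 = 0). -/

import Mathlib

open Finset Real Filter

noncomputable section

/-- The probability simplex in `ℝ^d`. -/
def simplexS (d : ℕ) : Set (Fin d → ℝ) := stdSimplex ℝ (Fin d)

/-- Transport plans between `α` and `β`: nonnegative matrices with prescribed marginals,
supported where `α i * β j > 0`. -/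
def couplings {d : ℕ} (α β : Fin d → ℝ) : Set (Matrix (Fin d) (Fin d) ℝ) :=
  {p | (∀ i j, 0 ≤ p i j) ∧ (∀ i, ∑ j, p i j = α i) ∧ (∀ j, ∑ i, p i j = β j) ∧
    ∀ i j, α i * β j = 0 → p i j = 0}

/-- The entropy-regularized transport cost of a plan `p` (with the convention `0 log 0 = 0`,
which holds automatically since `Real.log 0 = 0`). -/
def OTcost {d : ℕ} (C : Matrix (Fin d) (Fin d) ℝ) (ε : ℝ) (α β : Fin d → ℝ)
    (p : Matrix (Fin d) (Fin d) ℝ) : ℝ :=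
  (∑ i, ∑ j, p i j * C i j) + ε * ∑ i, ∑ j, p i j * Real.log (p i j / (α i * β j))

/-- Entropy-regularized optimal transport cost `OT_{C,ε}(α,β)`. -/
def OT {d : ℕ} (C : Matrix (Fin d) (Fin d) ℝ) (ε : ℝ) (α β : Fin d → ℝ) : ℝ :=
  sInf (OTcost C ε α β '' couplings α β)

/-- The Sinkhorn negentropy `Ω_C(α) = -(1/2) OT_{C,2}(α,α)`. -/
def Omega {d : ℕ} (C : Matrix (Fin d) (Fin d) ℝ) (α : Fin d → ℝ) : ℝ :=
  -(1 / 2) * OT C 2 α α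

/-!
The diagonal plan has no transport cost, so `Ω_C(α) ≥ Σ α_i log α_i` whenever `C` vanishes on
the diagonal. Conversely, splitting the relative entropy of a plan `p` as
`Σ p log p - 2 Σ α log α` and applying Gibbs' variational principle row by row gives
`Ω_C(α) ≤ Σ α_i log α_i + Σ_i α_i log Z_i` with partition functions `Z_i = Σ_j e^{-c_ij/2}`.
For the cost `C/ε` with `C` positive off the diagonal, each `Z_i` tends to `1` as `ε → 0⁺`.
-/

section Gibbs

variable {ι : Type*} [Fintype ι]

lemma mul_log_add_sub_le_mul_log {x y : ℝ} (hx : 0 ≤ x) (hy : 0 < y) :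
    x * log y + x - y ≤ x * log x := by
  rcases hx.eq_or_lt with rfl | hx
  · simpa using hy.le
  · have h := log_le_sub_one_of_pos (div_pos hy hx)
    rw [log_div hy.ne' hx.ne'] at h
    have := mul_le_mul_of_nonneg_left h hx.le
    rw [mul_sub, mul_sub, mul_div_cancel₀ _ hx.ne'] at this
    linarith

/-- Gibbs' variational principle, in the form of a lower bound. -/
theorem sum_mul_log_sub_mul_log_sum_exp_le {q : ι → ℝ} (hq : ∀ j, 0 ≤ q j) (c : ι → ℝ) :
    (∑ j, q j) * log (∑ j, q j) - (∑ j, q j) * log (∑ j, exp (-c j)) ≤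
      ∑ j, q j * (log (q j) + c j) := by
  set a := ∑ j, q j
  set Z := ∑ j, exp (-c j)
  rcases (Finset.sum_nonneg fun j _ => hq j : 0 ≤ a).eq_or_lt with ha | ha
  · have hq0 : ∀ j, q j = 0 := fun j =>
      (Finset.sum_eq_zero_iff_of_nonneg fun j _ => hq j).mp ha.symm j (mem_univ j)
    simp [a, hq0]
  obtain ⟨j₀, -, -⟩ := Finset.exists_ne_zero_of_sum_ne_zero ha.ne'
  have hZ : 0 < Z := Finset.sum_pos (fun j _ => exp_pos _) ⟨j₀, mem_univ j₀⟩
  -- compare `q` with the Gibbs weights `a e^{-c_j} / Z`, which have the same total mass `a`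
  have hy : ∀ j, 0 < a * exp (-c j) / Z := fun j => by positivity
  have hlog : ∀ j, log (a * exp (-c j) / Z) = log a - c j - log Z := fun j => by
    rw [log_div (by positivity) hZ.ne', log_mul ha.ne' (exp_pos _).ne', log_exp]; ring
  have hsum := Finset.sum_le_sum fun j (_ : j ∈ univ) => mul_log_add_sub_le_mul_log (hq j) (hy j)
  simp only [hlog, Finset.sum_sub_distrib, Finset.sum_add_distrib, mul_sub] at hsum
  rw [← Finset.sum_div, ← Finset.mul_sum, mul_div_cancel_right₀ _ hZ.ne', ← Finset.sum_mul,
    ← Finset.sum_mul] at hsum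
  simp only [mul_add, Finset.sum_add_distrib]
  linarith

end Gibbs

section Transport

variable {d : ℕ}

lemma sum_mul_log_div_eq_of_mem_couplings {α β : Fin d → ℝ} {p : Matrix (Fin d) (Fin d) ℝ}
    (hp : p ∈ couplings α β) :
    ∑ i, ∑ j, p i j * log (p i j / (α i * β j)) =
      ∑ i, ∑ j, p i j * log (p i j) - ∑ i, α i * log (α i) - ∑ j, β j * log (β j) := by
  obtain ⟨-, hrow, hcol, hsupp⟩ := hp
  have hcell : ∀ i j, p i j * log (p i j / (α i * β j)) =
      p i j * log (p i j) - p i j * log (α i) - p i j * log (β j) := fun i j => by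
    by_cases h : p i j = 0
    · simp [h]
    · have hαβ : α i * β j ≠ 0 := fun h0 => h (hsupp i j h0)
      rw [log_div h hαβ, log_mul (left_ne_zero_of_mul hαβ) (right_ne_zero_of_mul hαβ)]
      ring
  simp only [hcell, Finset.sum_sub_distrib, ← Finset.sum_mul, hrow]
  rw [Finset.sum_comm (f := fun i j => p i j * log (β j))]
  simp only [← Finset.sum_mul, hcol]

lemma OTcost_ge_of_mem_couplings (C : Matrix (Fin d) (Fin d) ℝ) {ε : ℝ} (hε : 0 < ε)
    {α β : Fin d → ℝ} {p : Matrix (Fin d) (Fin d) ℝ} (hp : p ∈ couplings α β) :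
    -ε * ∑ j, β j * log (β j) - ε * ∑ i, α i * log (∑ j, exp (-(C i j / ε))) ≤
      OTcost C ε α β p := by
  have hrow : ∀ i, α i * log (α i) - α i * log (∑ j, exp (-(C i j / ε))) ≤
      ∑ j, p i j * (log (p i j) + C i j / ε) := fun i => by
    simpa [hp.2.1 i] using
      sum_mul_log_sub_mul_log_sum_exp_le (hp.1 i) (fun j => C i j / ε)
  have hsum := Finset.sum_le_sum fun i (_ : i ∈ univ) => hrow i
  simp only [Finset.sum_sub_distrib, mul_add, Finset.sum_add_distrib, mul_div_assoc',
    ← Finset.sum_div] at hsum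
  have hscaled := mul_le_mul_of_nonneg_left hsum hε.le
  rw [mul_add, mul_div_cancel₀ _ hε.ne'] at hscaled
  rw [OTcost, sum_mul_log_div_eq_of_mem_couplings hp]
  linarith

lemma diagonal_mem_couplings {α : Fin d → ℝ} (hα : ∀ i, 0 ≤ α i) :
    Matrix.diagonal α ∈ couplings α α := by
  refine ⟨fun i j => ?_, fun i => by simp [Matrix.diagonal_apply],
    fun j => by simp [Matrix.diagonal_apply], fun i j h => ?_⟩
  · by_cases hij : i = j <;> simp [hij, hα]
  · by_cases hij : i = j
    · subst hij
      simpa using h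
    · simp [hij]

lemma OTcost_diagonal {C : Matrix (Fin d) (Fin d) ℝ} (hC : ∀ i, C i i = 0) (ε : ℝ)
    (α : Fin d → ℝ) :
    OTcost C ε α α (Matrix.diagonal α) = -ε * ∑ i, α i * log (α i) := by
  simp [OTcost, Matrix.diagonal_apply, hC, Finset.sum_neg_distrib]

end Transport

section Negentropy

variable {d : ℕ} {C : Matrix (Fin d) (Fin d) ℝ} {α : Fin d → ℝ}

lemma mem_lowerBounds_image_OTcost (C : Matrix (Fin d) (Fin d) ℝ) {ε : ℝ} (hε : 0 < ε)
    (β : Fin d → ℝ) :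
    -ε * ∑ j, β j * log (β j) - ε * ∑ i, α i * log (∑ j, exp (-(C i j / ε))) ∈
      lowerBounds (OTcost C ε α β '' couplings α β) := by
  rintro _ ⟨p, hp, rfl⟩
  exact OTcost_ge_of_mem_couplings C hε hp

lemma le_OT_self (C : Matrix (Fin d) (Fin d) ℝ) {ε : ℝ} (hε : 0 < ε) (hα : ∀ i, 0 ≤ α i) :
    -ε * ∑ i, α i * log (α i) - ε * ∑ i, α i * log (∑ j, exp (-(C i j / ε))) ≤
      OT C ε α α :=
  le_csInf ⟨_, Set.mem_image_of_mem _ (diagonal_mem_couplings hα)⟩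
    (mem_lowerBounds_image_OTcost C hε α)

lemma OT_self_le (hC : ∀ i, C i i = 0) {ε : ℝ} (hε : 0 < ε) (hα : ∀ i, 0 ≤ α i) :
    OT C ε α α ≤ -ε * ∑ i, α i * log (α i) := by
  rw [← OTcost_diagonal hC ε α]
  exact csInf_le ⟨_, mem_lowerBounds_image_OTcost C hε α⟩
    (Set.mem_image_of_mem _ (diagonal_mem_couplings hα))

lemma le_Omega (hC : ∀ i, C i i = 0) (hα : ∀ i, 0 ≤ α i) :
    ∑ i, α i * log (α i) ≤ Omega C α := by
  have := OT_self_le hC two_pos hα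
  rw [Omega]
  linarith

lemma Omega_le (C : Matrix (Fin d) (Fin d) ℝ) (hα : ∀ i, 0 ≤ α i) :
    Omega C α ≤ ∑ i, α i * log (α i) + ∑ i, α i * log (∑ j, exp (-(C i j / 2))) := by
  have := le_OT_self C two_pos hα
  rw [Omega]
  linarith

lemma tendsto_sum_exp_neg_div (hC : ∀ i, C i i = 0) (hCpos : ∀ i j, i ≠ j → 0 < C i j)
    (i : Fin d) :
    Tendsto (fun ε : ℝ => ∑ j, exp (-(C i j / ε / 2))) (nhdsWithin 0 (Set.Ioi 0)) (nhds 1) := by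
  have hterm : ∀ j, Tendsto (fun ε : ℝ => exp (-(C i j / ε / 2))) (nhdsWithin 0 (Set.Ioi 0))
      (nhds (if i = j then 1 else 0)) := fun j => by
    by_cases hij : i = j
    · subst hij
      simp [hC]
    have hlim : Tendsto (fun ε : ℝ => C i j / ε / 2) (nhdsWithin 0 (Set.Ioi 0)) atTop :=
      (tendsto_inv_nhdsGT_zero.const_mul_atTop (half_pos (hCpos i j hij))).congr fun ε => by
        ring
    rw [if_neg hij]
    exact tendsto_exp_neg_atTop_nhds_zero.comp hlim
  simpa using tendsto_finsetSum univ fun j _ => hterm j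

theorem tendsto_Omega_div_nhdsGT_zero (hC : ∀ i, C i i = 0) (hCpos : ∀ i j, i ≠ j → 0 < C i j)
    (hα : ∀ i, 0 ≤ α i) :
    Tendsto (fun ε : ℝ => Omega (Matrix.of fun i j => C i j / ε) α) (nhdsWithin 0 (Set.Ioi 0))
      (nhds (∑ i, α i * log (α i))) := by
  have herr : Tendsto (fun ε : ℝ => ∑ i, α i * log (∑ j, exp (-(C i j / ε / 2))))
      (nhdsWithin 0 (Set.Ioi 0)) (nhds 0) := by
    simpa using tendsto_finsetSum univ fun i _ =>
      ((tendsto_sum_exp_neg_div hC hCpos i).log one_ne_zero).const_mul (α i)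
  refine tendsto_of_tendsto_of_tendsto_of_le_of_le tendsto_const_nhds
    (by simpa using herr.const_add (∑ i, α i * log (α i)))
    (fun _ => le_Omega (fun i => by simp [hC]) hα) (fun _ => Omega_le _ hα)

end Negentropy

theorem sinkhorn_negentropy_limit_shannon (d : ℕ)
    (α : Fin d → ℝ) (hα : α ∈ simplexS d) :
    Filter.Tendsto
      (fun ε : ℝ =>
        Omega (Matrix.of fun i j : Fin d => (if i = j then (0 : ℝ) else 1) / ε) α)
      (nhdsWithin 0 (Set.Ioi 0)) (nhds (∑ i, α i * Real.log (α i))) :=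
  tendsto_Omega_div_nhdsGT_zero (C := Matrix.of fun i j => if i = j then 0 else 1)
    (by simp) (fun i j hij => by simp [hij]) hα.1
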